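/- arXiv:math/0005245 — 10 statements merged into one kernel-verified Lean document; each statement's English description precedes it below -/
import Mathlib

section
/- Let z_1,…,z_6 ∈ ℂ be pairwise distinct, and let M(z) = (az+b)/(cz+d) with a,b,c,d ∈ ℂ, ad−bc ≠ 0, be a Möbius transformation satisfying M(z_1)=z_4, M(z_2)=z_5, M(z_3)=z_6 (assume cz_k+d ≠ 0 for k=1,…,6). Then the multi-ratio satisfies m(z_1,z_2,z_3,z_4,z_5,z_6) = −1 if and only if M also satisfies M(z_4)=z_1, M(z_5)=z_2 and M(z_6)=z_3 (i.e. M acts as an involution on the six points, sending z_k to z_{k+3} with indices mod 6). -/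
/-- Proposition 1 (ii)⇔(iii): six pairwise distinct points with a Möbius
transformation sending `z₁,z₂,z₃` to `z₄,z₅,z₆` have multi-ratio `-1` iff the
Möbius transformation acts as an involution on the six points. -/
theorem multiRatio_eq_neg_one_iff_mobius_involution
    (z : Fin 6 → ℂ) (hz : Function.Injective z)
    (a b c d : ℂ) (hdet : a * d - b * c ≠ 0)
    (hden : ∀ k, c * z k + d ≠ 0)
    (h1 : (a * z 0 + b) / (c * z 0 + d) = z 3)
    (h2 : (a * z 1 + b) / (c * z 1 + d) = z 4)
    (h3 : (a * z 2 + b) / (c * z 2 + d) = z 5) :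
    (z 0 - z 1) * (z 2 - z 3) * (z 4 - z 5) /
        ((z 1 - z 2) * (z 3 - z 4) * (z 5 - z 0)) = -1 ↔
      ((a * z 3 + b) / (c * z 3 + d) = z 0 ∧
       (a * z 4 + b) / (c * z 4 + d) = z 1 ∧
       (a * z 5 + b) / (c * z 5 + d) = z 2) := by
  rw [div_eq_iff (hden 0)] at h1
  rw [div_eq_iff (hden 1)] at h2
  rw [div_eq_iff (hden 2)] at h3
  have n01 : z 0 - z 1 ≠ 0 := sub_ne_zero.mpr (hz.ne (by decide))
  have n12 : z 1 - z 2 ≠ 0 := sub_ne_zero.mpr (hz.ne (by decide))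
  have n20 : z 2 - z 0 ≠ 0 := sub_ne_zero.mpr (hz.ne (by decide))
  have n30 : z 3 - z 0 ≠ 0 := sub_ne_zero.mpr (hz.ne (by decide))
  have n41 : z 4 - z 1 ≠ 0 := sub_ne_zero.mpr (hz.ne (by decide))
  have n52 : z 5 - z 2 ≠ 0 := sub_ne_zero.mpr (hz.ne (by decide))
  have n34 : z 3 - z 4 ≠ 0 := sub_ne_zero.mpr (hz.ne (by decide))
  have n50 : z 5 - z 0 ≠ 0 := sub_ne_zero.mpr (hz.ne (by decide))
  have hDn : (z 1 - z 2) * (z 3 - z 4) * (z 5 - z 0) ≠ 0 :=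
    mul_ne_zero (mul_ne_zero n12 n34) n50
  -- cleared-denominator difference identities
  have q1 : (z 2 - z 3) * (c * z 0 + d) = z 2 * (c * z 0 + d) - (a * z 0 + b) := by
    linear_combination h1
  have q2 : (z 3 - z 4) * ((c * z 0 + d) * (c * z 1 + d)) = (a * d - b * c) * (z 0 - z 1) := by
    linear_combination (c * z 0 + d) * h2 - (c * z 1 + d) * h1
  have q3 : (z 4 - z 5) * ((c * z 1 + d) * (c * z 2 + d)) = (a * d - b * c) * (z 1 - z 2) := by
    linear_combination (c * z 1 + d) * h3 - (c * z 2 + d) * h2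
  have q4 : (z 5 - z 0) * (c * z 2 + d) = (a * z 2 + b) - z 0 * (c * z 2 + d) := by
    linear_combination -h3
  have t1 : (z 0 - z 1) * ((z 2 - z 3) * (c * z 0 + d)) *
      ((z 4 - z 5) * ((c * z 1 + d) * (c * z 2 + d))) =
      (z 0 - z 1) * (z 2 * (c * z 0 + d) - (a * z 0 + b)) * ((a * d - b * c) * (z 1 - z 2)) := by
    rw [q1, q3]
  have t2 : (z 1 - z 2) * ((z 3 - z 4) * ((c * z 0 + d) * (c * z 1 + d))) *
      ((z 5 - z 0) * (c * z 2 + d)) =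
      (z 1 - z 2) * ((a * d - b * c) * (z 0 - z 1)) *
        ((a * z 2 + b) - z 0 * (c * z 2 + d)) := by
    rw [q2, q4]
  have main : ((z 0 - z 1) * (z 2 - z 3) * (z 4 - z 5) +
      (z 1 - z 2) * (z 3 - z 4) * (z 5 - z 0)) *
      ((c * z 0 + d) * (c * z 1 + d) * (c * z 2 + d)) =
      (a + d) * ((z 2 - z 0) * ((z 0 - z 1) * (z 1 - z 2) * (a * d - b * c))) := by
    linear_combination t1 + t2
  have key : (z 0 - z 1) * (z 2 - z 3) * (z 4 - z 5) /
      ((z 1 - z 2) * (z 3 - z 4) * (z 5 - z 0)) = -1 ↔ a + d = 0 := by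
    rw [div_eq_iff hDn]
    constructor
    · intro h
      have h0 : (a + d) * ((z 2 - z 0) * ((z 0 - z 1) * (z 1 - z 2) * (a * d - b * c))) = 0 := by
        linear_combination ((c * z 0 + d) * (c * z 1 + d) * (c * z 2 + d)) * h - main
      rcases mul_eq_zero.mp h0 with h' | h'
      · exact h'
      · exact absurd h' (mul_ne_zero n20 (mul_ne_zero (mul_ne_zero n01 n12) hdet))
    · intro h
      have hC : (c * z 0 + d) * (c * z 1 + d) * (c * z 2 + d) ≠ 0 :=
        mul_ne_zero (mul_ne_zero (hden 0) (hden 1)) (hden 2)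
      apply mul_right_cancel₀ hC
      linear_combination main + (z 2 - z 0) * ((z 0 - z 1) * (z 1 - z 2) * (a * d - b * c)) * h
  rw [key]
  constructor
  · intro had
    refine ⟨?_, ?_, ?_⟩
    · rw [div_eq_iff (hden 3)]
      linear_combination h1 + (z 3 - z 0) * had
    · rw [div_eq_iff (hden 4)]
      linear_combination h2 + (z 4 - z 1) * had
    · rw [div_eq_iff (hden 5)]
      linear_combination h3 + (z 5 - z 2) * had
  · rintro ⟨g1, -, -⟩
    rw [div_eq_iff (hden 3)] at g1
    have h0 : (a + d) * (z 3 - z 0) = 0 := by linear_combination g1 - h1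
    rcases mul_eq_zero.mp h0 with h' | h'
    · exact h'
    · exact absurd h' n30
end

section
/- Let r_1, r_2, r_3, r_4, r_5 > 0 with r_5 = r_1, and let z_1,…,z_5 ∈ ℝ satisfy z_{k+1} = z_k + 2√(r_k r_{k+1}) for k = 1,…,4. Then (z_1 − z_2)(z_3 − z_4) = (z_2 − z_3)(z_4 − z_5); equivalently, the multi-ratio m(z_1,…,z_5,z_6) of the six points with z_6 = ∞ (i.e. the expression −((z_1−z_2)(z_3−z_4))/((z_2−z_3)(z_4−z_5))) equals −1. -/
/-- A chain of circles tangent to the real axis at `z₁, …, z₅` with radii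
`r₁, …, r₅`, consecutive circles mutually tangent (`z_{k+1} = z_k + 2√(r_k r_{k+1})`)
and `r₅ = r₁`, satisfies `(z₁-z₂)(z₃-z₄) = (z₂-z₃)(z₄-z₅)`, i.e. the multi-ratio
with sixth point at infinity equals `-1`. -/
theorem multiRatio_of_circle_chain
    (r₁ r₂ r₃ r₄ r₅ : ℝ) (hr₁ : 0 < r₁) (hr₂ : 0 < r₂) (hr₃ : 0 < r₃)
    (hr₄ : 0 < r₄) (hr₅ : 0 < r₅) (hr : r₅ = r₁)
    (z₁ z₂ z₃ z₄ z₅ : ℝ)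
    (hz₂ : z₂ = z₁ + 2 * Real.sqrt (r₁ * r₂))
    (hz₃ : z₃ = z₂ + 2 * Real.sqrt (r₂ * r₃))
    (hz₄ : z₄ = z₃ + 2 * Real.sqrt (r₃ * r₄))
    (hz₅ : z₅ = z₄ + 2 * Real.sqrt (r₄ * r₅)) :
    (z₁ - z₂) * (z₃ - z₄) = (z₂ - z₃) * (z₄ - z₅) := by
  subst hr hz₂ hz₃ hz₄ hz₅
  have h : ∀ a b c d : ℝ, 0 ≤ a → 0 ≤ b → 0 ≤ c → 0 ≤ d →
      Real.sqrt (a * b) * Real.sqrt (c * d) = Real.sqrt (b * c) * Real.sqrt (d * a) := by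
    intro a b c d ha hb hc hd
    rw [← Real.sqrt_mul (by positivity), ← Real.sqrt_mul (by positivity)]
    ring_nf
  have key := h r₅ r₂ r₃ r₄ hr₅.le hr₂.le hr₃.le hr₄.le
  nlinarith [key]
end

section
/- Let z_1 < z_2 < z_3 < z_4 < z_5 be real numbers satisfying (z_1 − z_2)(z_3 − z_4) = (z_2 − z_3)(z_4 − z_5), and let r_1 > 0 be arbitrary. Define recursively r_{k+1} = (z_{k+1} − z_k)² / (4 r_k) for k = 1,…,4. Then r_5 = r_1, and for each k = 1,…,4 the circles with centers (z_k, r_k) and (z_{k+1}, r_{k+1}) and radii r_k and r_{k+1} are externally tangent (distance of centers equals r_k + r_{k+1}); each of these circles is tangent to the real axis at (z_k, 0). -/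
/-!
A circle of radius `p > 0` tangent to the real axis at `a` has center `a + p i`, and two such
circles (at `a`, `b`, radii `p`, `q`) are externally tangent exactly when
`(a - b)² + (p - q)² = (p + q)²`, i.e. `(b - a)² = 4 p q`. This is the recursion defining the
radii. Multiplying the first and third relations and comparing with the product of the second
and fourth, the multi-ratio condition `(z₂ - z₁)(z₄ - z₃) = (z₃ - z₂)(z₅ - z₄)` gives
`r₁ r₂ · r₃ r₄ = r₂ r₃ · r₄ r₅`, whence `r₅ = r₁`.
-/

open Complex

theorem dist_add_mul_I_self (a r : ℝ) : dist ((a : ℂ) + r * I) (a : ℂ) = |r| := by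
  simp

theorem dist_add_mul_I_eq_add_of_sq_sub_eq {a b p q : ℝ} (hp : 0 ≤ p) (hq : 0 ≤ q)
    (h : (b - a) ^ 2 = 4 * p * q) :
    dist ((a : ℂ) + p * I) ((b : ℂ) + q * I) = p + q := by
  have hsum : (a - b) ^ 2 + (p - q) ^ 2 = (p + q) ^ 2 := by linear_combination h
  simp [dist_eq_re_im, hsum, Real.sqrt_sq (add_nonneg hp hq)]

theorem pos_and_sq_eq_of_eq_div {d r r' : ℝ} (hd : d ≠ 0) (hr : 0 < r)
    (h : r' = d ^ 2 / (4 * r)) : 0 < r' ∧ d ^ 2 = 4 * r * r' := by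
  subst h
  exact ⟨by positivity, by field_simp⟩

theorem eq_of_sq_eq_four_mul_chain {d₁ d₂ d₃ d₄ r₁ r₂ r₃ r₄ r₅ : ℝ}
    (hd : d₁ * d₃ = d₂ * d₄) (h₁ : d₁ ^ 2 = 4 * r₁ * r₂) (h₂ : d₂ ^ 2 = 4 * r₂ * r₃)
    (h₃ : d₃ ^ 2 = 4 * r₃ * r₄) (h₄ : d₄ ^ 2 = 4 * r₄ * r₅) (hr : r₂ * r₃ * r₄ ≠ 0) :
    r₅ = r₁ := by
  have hsq : (d₁ * d₃) ^ 2 = (d₂ * d₄) ^ 2 := by rw [hd]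
  rw [mul_pow, mul_pow, h₁, h₂, h₃, h₄] at hsq
  have hprod : 16 * (r₂ * r₃ * r₄) * r₁ = 16 * (r₂ * r₃ * r₄) * r₅ := by
    linear_combination hsq
  exact (mul_left_cancel₀ (by positivity) hprod).symm

/-- Construction of the one-parameter family of flowers: given ordered real points
with multi-ratio `-1` (sixth point at infinity) and an arbitrary first radius,
the recursively defined radii close up (`r₅ = r₁`), consecutive circles with
centers `(z_k, r_k)` are externally tangent, and each circle is tangent to the
real axis at `(z_k, 0)`. -/
theorem flower_family_construction
    (z₁ z₂ z₃ z₄ z₅ : ℝ) (h12 : z₁ < z₂) (h23 : z₂ < z₃) (h34 : z₃ < z₄)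
    (h45 : z₄ < z₅)
    (hm : (z₁ - z₂) * (z₃ - z₄) = (z₂ - z₃) * (z₄ - z₅))
    (r₁ : ℝ) (hr₁ : 0 < r₁) (r₂ r₃ r₄ r₅ : ℝ)
    (hr₂ : r₂ = (z₂ - z₁) ^ 2 / (4 * r₁))
    (hr₃ : r₃ = (z₃ - z₂) ^ 2 / (4 * r₂))
    (hr₄ : r₄ = (z₄ - z₃) ^ 2 / (4 * r₃))
    (hr₅ : r₅ = (z₅ - z₄) ^ 2 / (4 * r₄)) :
    r₅ = r₁ ∧
    dist ((z₁ : ℂ) + r₁ * I) ((z₂ : ℂ) + r₂ * I) = r₁ + r₂ ∧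
    dist ((z₂ : ℂ) + r₂ * I) ((z₃ : ℂ) + r₃ * I) = r₂ + r₃ ∧
    dist ((z₃ : ℂ) + r₃ * I) ((z₄ : ℂ) + r₄ * I) = r₃ + r₄ ∧
    dist ((z₄ : ℂ) + r₄ * I) ((z₅ : ℂ) + r₅ * I) = r₄ + r₅ ∧
    dist ((z₁ : ℂ) + r₁ * I) (z₁ : ℂ) = r₁ ∧
    dist ((z₂ : ℂ) + r₂ * I) (z₂ : ℂ) = r₂ ∧
    dist ((z₃ : ℂ) + r₃ * I) (z₃ : ℂ) = r₃ ∧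
    dist ((z₄ : ℂ) + r₄ * I) (z₄ : ℂ) = r₄ ∧
    dist ((z₅ : ℂ) + r₅ * I) (z₅ : ℂ) = r₅ := by
  obtain ⟨hr2, e2⟩ := pos_and_sq_eq_of_eq_div (sub_pos.2 h12).ne' hr₁ hr₂
  obtain ⟨hr3, e3⟩ := pos_and_sq_eq_of_eq_div (sub_pos.2 h23).ne' hr2 hr₃
  obtain ⟨hr4, e4⟩ := pos_and_sq_eq_of_eq_div (sub_pos.2 h34).ne' hr3 hr₄
  obtain ⟨hr5, e5⟩ := pos_and_sq_eq_of_eq_div (sub_pos.2 h45).ne' hr4 hr₅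
  have hcross : (z₂ - z₁) * (z₄ - z₃) = (z₃ - z₂) * (z₅ - z₄) := by linear_combination hm
  have axis (z r : ℝ) (hr : 0 < r) : dist ((z : ℂ) + r * I) (z : ℂ) = r := by
    rw [dist_add_mul_I_self, abs_of_pos hr]
  exact ⟨eq_of_sq_eq_four_mul_chain hcross e2 e3 e4 e5 (by positivity),
    dist_add_mul_I_eq_add_of_sq_sub_eq hr₁.le hr2.le e2,
    dist_add_mul_I_eq_add_of_sq_sub_eq hr2.le hr3.le e3,
    dist_add_mul_I_eq_add_of_sq_sub_eq hr3.le hr4.le e4,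
    dist_add_mul_I_eq_add_of_sq_sub_eq hr4.le hr5.le e5,
    axis _ _ hr₁, axis _ _ hr2, axis _ _ hr3, axis _ _ hr4, axis _ _ hr5⟩
end

section
/- Let z_{k−1} < z_k < z_{k+1} be real numbers and r_{k−1}, r_k, r_{k+1} > 0 with (z_k − z_{k−1})² = 4 r_{k−1} r_k and (z_{k+1} − z_k)² = 4 r_k r_{k+1} (so the circles tangent to the real axis at these points with these radii, lying in the upper half-plane, are consecutively externally tangent). Let w_{k−1} = ((r_k z_{k−1} + r_{k−1} z_k) + 2 i r_{k−1} r_k)/(r_{k−1} + r_k) and w_k = ((r_{k+1} z_k + r_k z_{k+1}) + 2 i r_k r_{k+1})/(r_k + r_{k+1}) be the tangency points of the consecutive circles, regarded as complex numbers. Then the cross-ratio s_k := q(z_k, z_{k−1}, w_{k−1}, w_k) is purely imaginary with negative imaginary part (in particular Re(s_k) = 0 and s_k ≠ 0). -/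
/-!
Invert at `z_k`, i.e. apply `z ↦ (z - z_k)⁻¹`. The real line stays the real line, the circle of
radius `r_k` tangent to it at `z_k` becomes the horizontal line `Im z = -1/(2 r_k)`, and the
tangency point of circle `k` with a neighbour tangent to ℝ at `x` lands at
`(x - z_k)⁻¹ - i/(2 r_k)`. The cross-ratio is invariant, and with its first point sent to `∞` it is
`(D - C)/(B - C)`; here `D - C` is real and `B - C = i/(2 r_k)`, so `s_k = -2 r_k (D - B) i`
with `D - B = (z_{k+1} - z_k)⁻¹ - (z_{k-1} - z_k)⁻¹ > 0`.
-/

open Complex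

noncomputable def crossRatio (a b c d : ℂ) : ℂ := (a - b) * (c - d) / ((b - c) * (d - a))

theorem crossRatio_eq_div_inv_sub {a b c d : ℂ} (hb : b ≠ a) (hc : c ≠ a) (hd : d ≠ a) :
    crossRatio a b c d = ((d - a)⁻¹ - (c - a)⁻¹) / ((b - a)⁻¹ - (c - a)⁻¹) := by
  rcases eq_or_ne b c with rfl | hbc
  · simp [crossRatio]
  have hb' : b - a ≠ 0 := sub_ne_zero.mpr hb
  have hc' : c - a ≠ 0 := sub_ne_zero.mpr hc
  have hd' : d - a ≠ 0 := sub_ne_zero.mpr hd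
  have hbc' : b - c ≠ 0 := sub_ne_zero.mpr hbc
  have hcb : c - a - (b - a) ≠ 0 := by simpa [sub_eq_zero] using hbc.symm
  rw [crossRatio, inv_sub_inv hd' hc', inv_sub_inv hb' hc', div_div_div_eq,
    div_eq_div_iff (mul_ne_zero hbc' hd') (mul_ne_zero (mul_ne_zero hd' hc') hcb)]
  ring

noncomputable def tangencyPoint (x₁ r₁ x₂ r₂ : ℝ) : ℂ :=
  ((r₂ * x₁ + r₁ * x₂) + 2 * I * r₁ * r₂) / (r₁ + r₂)

theorem tangencyPoint_comm (x₁ r₁ x₂ r₂ : ℝ) :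
    tangencyPoint x₁ r₁ x₂ r₂ = tangencyPoint x₂ r₂ x₁ r₁ := by
  unfold tangencyPoint
  ring

section Tangent

variable {x₁ r₁ x₂ r₂ : ℝ}

theorem inv_tangencyPoint_sub_left (hx : x₁ ≠ x₂) (hr₁ : 0 < r₁) (hr₂ : 0 < r₂)
    (ht : (x₂ - x₁) ^ 2 = 4 * r₁ * r₂) :
    (tangencyPoint x₁ r₁ x₂ r₂ - x₁)⁻¹ = ((x₂ : ℂ) - x₁)⁻¹ - I / (2 * r₁) := by
  have hd : ((x₂ : ℂ) - x₁) ≠ 0 := by exact_mod_cast sub_ne_zero.mpr hx.symm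
  have hr : (r₁ : ℂ) + r₂ ≠ 0 := by exact_mod_cast (by linarith : r₁ + r₂ ≠ 0)
  have hr₁' : (r₁ : ℂ) ≠ 0 := by exact_mod_cast hr₁.ne'
  have htC : ((x₂ : ℂ) - x₁) ^ 2 = 4 * r₁ * r₂ := by exact_mod_cast ht
  refine inv_eq_of_mul_eq_one_right ?_
  unfold tangencyPoint
  field_simp
  linear_combination -(r₁ * I) * htC + (2 * r₁ * r₂ * (x₁ - x₂)) * I_sq

theorem tangencyPoint_ne_left (hx : x₁ ≠ x₂) (hr₁ : 0 < r₁) (hr₂ : 0 < r₂)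
    (ht : (x₂ - x₁) ^ 2 = 4 * r₁ * r₂) :
    tangencyPoint x₁ r₁ x₂ r₂ ≠ x₁ := by
  intro h
  have him := congrArg im (inv_tangencyPoint_sub_left hx hr₁ hr₂ ht)
  simp [h, div_eq_mul_inv, hr₁.ne'] at him

theorem inv_tangencyPoint_sub_right (hx : x₁ ≠ x₂) (hr₁ : 0 < r₁) (hr₂ : 0 < r₂)
    (ht : (x₂ - x₁) ^ 2 = 4 * r₁ * r₂) :
    (tangencyPoint x₁ r₁ x₂ r₂ - x₂)⁻¹ = ((x₁ : ℂ) - x₂)⁻¹ - I / (2 * r₂) := by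
  rw [tangencyPoint_comm]
  exact inv_tangencyPoint_sub_left hx.symm hr₂ hr₁ (by linear_combination ht)

theorem tangencyPoint_ne_right (hx : x₁ ≠ x₂) (hr₁ : 0 < r₁) (hr₂ : 0 < r₂)
    (ht : (x₂ - x₁) ^ 2 = 4 * r₁ * r₂) :
    tangencyPoint x₁ r₁ x₂ r₂ ≠ x₂ := by
  rw [tangencyPoint_comm]
  exact tangencyPoint_ne_left hx.symm hr₂ hr₁ (by linear_combination ht)

end Tangent

open Complex in
/-- The He–Schramm cross-ratio `s_k = q(z_k, z_{k-1}, w_{k-1}, w_k)` of three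
consecutive mutually tangent circles of a flower (normalized so that the center
circle is the real line) is purely imaginary with negative imaginary part. -/
theorem crossRatio_purely_imaginary
    (zkm zk zkp : ℝ) (h1 : zkm < zk) (h2 : zk < zkp)
    (rkm rk rkp : ℝ) (hrkm : 0 < rkm) (hrk : 0 < rk) (hrkp : 0 < rkp)
    (ht1 : (zk - zkm) ^ 2 = 4 * rkm * rk)
    (ht2 : (zkp - zk) ^ 2 = 4 * rk * rkp)
    (wkm wk : ℂ)
    (hwkm : wkm = (((rk : ℂ) * zkm + (rkm : ℂ) * zk) + 2 * I * rkm * rk) /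
        ((rkm : ℂ) + rk))
    (hwk : wk = (((rkp : ℂ) * zk + (rk : ℂ) * zkp) + 2 * I * rk * rkp) /
        ((rk : ℂ) + rkp))
    (s : ℂ)
    (hs : s = (((zk : ℂ) - zkm) * (wkm - wk)) / (((zkm : ℂ) - wkm) * (wk - zk))) :
    s.re = 0 ∧ s.im < 0 ∧ s ≠ 0 := by
  have hxm : zkm ≠ zk := h1.ne
  have hxp : zk ≠ zkp := h2.ne
  have hs' : s = crossRatio zk zkm (tangencyPoint zkm rkm zk rk)
      (tangencyPoint zk rk zkp rkp) := by
    rw [hs, hwkm, hwk]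
    rfl
  have key : s = -((2 * rk * ((zkp - zk)⁻¹ - (zkm - zk)⁻¹) : ℝ) : ℂ) * I := by
    rw [hs', crossRatio_eq_div_inv_sub (by exact_mod_cast hxm)
      (tangencyPoint_ne_right hxm hrkm hrk ht1) (tangencyPoint_ne_left hxp hrk hrkp ht2),
      inv_tangencyPoint_sub_right hxm hrkm hrk ht1, inv_tangencyPoint_sub_left hxp hrk hrkp ht2,
      sub_sub_sub_cancel_right, sub_sub_cancel, div_div_eq_mul_div, div_I]
    push_cast
    ring
  have hpos : 0 < 2 * rk * ((zkp - zk)⁻¹ - (zkm - zk)⁻¹) := by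
    have : (zkm - zk)⁻¹ < 0 := inv_lt_zero.mpr (sub_neg.mpr h1)
    have : 0 < (zkp - zk)⁻¹ := inv_pos.mpr (sub_pos.mpr h2)
    exact mul_pos (by positivity) (by linarith)
  obtain ⟨t, ht, rfl⟩ : ∃ t : ℝ, 0 < t ∧ s = -t * I := ⟨_, hpos, key⟩
  exact ⟨by simp, by simpa using ht, by simp [ht.ne']⟩
end

section
/- Let s_1, …, s_6 be nonzero complex numbers and for each k let M_k be the 2×2 complex matrix M_k = [[0, 1], [1, s_k]]. Then the six He–Schramm equations s_k + s_{k+2} + s_{k+4} + s_k s_{k+1} s_{k+2} = 0 (for all k mod 6) hold if and only if M_6 M_5 M_4 M_3 M_2 M_1 is the identity matrix. -/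
private lemma fin2_ext_iff (a b c d a' b' c' d' : ℂ) :
    (!![a,b;c,d] : Matrix (Fin 2) (Fin 2) ℂ) = !![a',b';c',d'] ↔
      a = a' ∧ b = b' ∧ c = c' ∧ d = d' := by
  rw [← Matrix.ext_iff]
  simp [Fin.forall_fin_two]
  tauto

/-- The six He–Schramm equations `s_k + s_{k+2} + s_{k+4} + s_k s_{k+1} s_{k+2} = 0`
(indices mod 6) hold for nonzero `s_k` iff the product of the matrices
`M_k = [[0,1],[1,s_k]]` around the hexagon is the identity. -/
theorem heSchramm_iff_matrix_product_identity
    (s : ZMod 6 → ℂ) (hs : ∀ k, s k ≠ 0)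
    (M : ZMod 6 → Matrix (Fin 2) (Fin 2) ℂ)
    (hM : ∀ k, M k = !![0, 1; 1, s k]) :
    (∀ k : ZMod 6, s k + s (k + 2) + s (k + 4) + s k * s (k + 1) * s (k + 2) = 0) ↔
      M 5 * M 4 * M 3 * M 2 * M 1 * M 0 = 1 := by
  rw [hM 5, hM 4, hM 3, hM 2, hM 1, hM 0,
    show (1 : Matrix (Fin 2) (Fin 2) ℂ) = !![1,0;0,1] from Matrix.one_fin_two]
  simp only [Matrix.mul_fin_two]
  rw [fin2_ext_iff]
  constructor
  · intro H
    have h0 : s 0 + s 2 + s 4 + s 0 * s 1 * s 2 = 0 := H 0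
    have h1 : s 1 + s 3 + s 5 + s 1 * s 2 * s 3 = 0 := H 1
    have h2 : s 2 + s 4 + s 0 + s 2 * s 3 * s 4 = 0 := H 2
    have h3 : s 3 + s 5 + s 1 + s 3 * s 4 * s 5 = 0 := H 3
    have h4 : s 4 + s 0 + s 2 + s 4 * s 5 * s 0 = 0 := H 4
    have h5 : s 5 + s 1 + s 3 + s 5 * s 0 * s 1 = 0 := H 5
    refine ⟨?_, ?_, ?_, ?_⟩
    · refine mul_left_cancel₀ (hs 0) ?_
      linear_combination h0 + s 0 * s 4 * h1 - h4
    · linear_combination h0 + s 0 * s 4 * h1 + h2 - h4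
    · linear_combination h1 + s 1 * s 5 * h2 + h3 - h5
    · refine mul_left_cancel₀ (hs 0) ?_
      linear_combination (-1 + s 0 * s 3 - s 0 * s 1 + s 0 ^ 2 * s 1 * s 3) * h0
        + (-(s 0 * s 4) - s 0 ^ 2 - s 0 ^ 2 * s 1 * s 4 - s 0 ^ 3 * s 1) * h1
        + (s 0 * s 5 + s 0 * s 1 + s 0 ^ 2 * s 1 * s 5 + s 0 ^ 2 * s 1 ^ 2) * h2
        + s 0 ^ 2 * h3 + (1 + s 0 * s 1) * h4
  · rintro ⟨e0, e1, e2, e3⟩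
    have H0 : s 0 + s 2 + s 4 + s 0 * s 1 * s 2 = 0 := by
      linear_combination (-(s 2) - s 0 - s 0 * s 1 * s 2) * e0 + (1 + s 1 * s 2) * e1
    have H1 : s 1 + s 3 + s 5 + s 1 * s 2 * s 3 = 0 := by
      linear_combination (-(s 5)) * e0 + e2
    have H2 : s 2 + s 4 + s 0 + s 2 * s 3 * s 4 = 0 := by
      linear_combination (-(s 0)) * e0 + e1
    have H3 : s 3 + s 5 + s 1 + s 3 * s 4 * s 5 = 0 := by
      linear_combination (-(s 5) - s 3 - s 3 * s 4 * s 5) * e0 + (1 + s 3 * s 4) * e2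
    have H4 : s 4 + s 0 + s 2 + s 4 * s 5 * s 0 = 0 := by
      linear_combination (-(s 2) - 2 * s 0 - s 0 * s 4 * s 5 - s 0 * s 1 * s 2) * e0
        + (1 + s 1 * s 2) * e1 + s 0 * s 4 * e2
    have H5 : s 5 + s 1 + s 3 + s 5 * s 0 * s 1 = 0 := by
      linear_combination (-2 * s 5 - s 3 - s 3 * s 4 * s 5 - s 0 * s 1 * s 5) * e0
        + s 1 * s 5 * e1 + (1 + s 3 * s 4) * e2
    intro k
    fin_cases k
    · exact H0
    · exact H1
    · exact H2
    · exact H3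
    · exact H4
    · exact H5
end

section
/- For x ∈ ℂ define the Möbius map T_x(d) = −(x+d)/(1+xd). Let a, b, c ∈ ℂ satisfy a + b + c + abc = 0 and let d_1, …, d_6 ∈ ℂ satisfy d_2 = T_b(d_1), d_3 = T_c(d_2), d_4 = T_a(d_3), d_5 = T_b(d_4), d_6 = T_c(d_5), where all the denominators 1 + b d_1, 1 + c d_2, 1 + a d_3, 1 + b d_4, 1 + c d_5 and 1 + a d_6 are nonzero. Then T_a(d_6) = d_1; that is, the continuation of the cross-ratio data around the central honeycomb closes up, so the monodromy Möbius transformation around a honeycomb is the identity. -/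
/-- Trivial monodromy around a honeycomb: if `a + b + c + abc = 0` and the values
`d₁, …, d₆` are continued around the central honeycomb by the Möbius maps
`T_x(d) = -(x+d)/(1+xd)` (with all denominators nonzero), then the continuation
closes up: `T_a(d₆) = d₁`. -/
theorem honeycomb_monodromy_identity (a b c : ℂ)
    (habc : a + b + c + a * b * c = 0)
    (d₁ d₂ d₃ d₄ d₅ d₆ : ℂ)
    (h1 : 1 + b * d₁ ≠ 0) (hd2 : d₂ = -(b + d₁) / (1 + b * d₁))
    (h2 : 1 + c * d₂ ≠ 0) (hd3 : d₃ = -(c + d₂) / (1 + c * d₂))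
    (h3 : 1 + a * d₃ ≠ 0) (hd4 : d₄ = -(a + d₃) / (1 + a * d₃))
    (h4 : 1 + b * d₄ ≠ 0) (hd5 : d₅ = -(b + d₄) / (1 + b * d₄))
    (h5 : 1 + c * d₅ ≠ 0) (hd6 : d₆ = -(c + d₅) / (1 + c * d₅))
    (h6 : 1 + a * d₆ ≠ 0) :
    -(a + d₆) / (1 + a * d₆) = d₁ := by
  have f2 : d₂ * (1 + b * d₁) = -(b + d₁) := by
    rw [hd2, div_mul_cancel₀ _ h1]
  have g2 : (1 + b * d₁) ≠ 0 := h1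
  have e3 : d₃ * (1 + c * d₂) = -(c + d₂) := by
    rw [hd3, div_mul_cancel₀ _ h2]
  have f3 : d₃ * ((1 + b * d₁) + c * (-(b + d₁))) = (-(c * (1 + b * d₁) + (-(b + d₁)))) := by
    linear_combination (1 + b * d₁) * e3 - (c * d₃ + 1) * f2
  have gd3 : ((1 + b * d₁) + c * (-(b + d₁))) = (1 + c * d₂) * (1 + b * d₁) := by
    linear_combination -c * f2
  have g3 : ((1 + b * d₁) + c * (-(b + d₁))) ≠ 0 := by
    rw [gd3]; exact mul_ne_zero h2 g2
  have e4 : d₄ * (1 + a * d₃) = -(a + d₃) := by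
    rw [hd4, div_mul_cancel₀ _ h3]
  have f4 : d₄ * (((1 + b * d₁) + c * (-(b + d₁))) + a * (-(c * (1 + b * d₁) + (-(b + d₁))))) = (-(a * ((1 + b * d₁) + c * (-(b + d₁))) + (-(c * (1 + b * d₁) + (-(b + d₁)))))) := by
    linear_combination ((1 + b * d₁) + c * (-(b + d₁))) * e4 - (a * d₄ + 1) * f3
  have gd4 : (((1 + b * d₁) + c * (-(b + d₁))) + a * (-(c * (1 + b * d₁) + (-(b + d₁))))) = (1 + a * d₃) * ((1 + b * d₁) + c * (-(b + d₁))) := by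
    linear_combination -a * f3
  have g4 : (((1 + b * d₁) + c * (-(b + d₁))) + a * (-(c * (1 + b * d₁) + (-(b + d₁))))) ≠ 0 := by
    rw [gd4]; exact mul_ne_zero h3 g3
  have e5 : d₅ * (1 + b * d₄) = -(b + d₄) := by
    rw [hd5, div_mul_cancel₀ _ h4]
  have f5 : d₅ * ((((1 + b * d₁) + c * (-(b + d₁))) + a * (-(c * (1 + b * d₁) + (-(b + d₁))))) + b * (-(a * ((1 + b * d₁) + c * (-(b + d₁))) + (-(c * (1 + b * d₁) + (-(b + d₁))))))) = (-(b * (((1 + b * d₁) + c * (-(b + d₁))) + a * (-(c * (1 + b * d₁) + (-(b + d₁))))) + (-(a * ((1 + b * d₁) + c * (-(b + d₁))) + (-(c * (1 + b * d₁) + (-(b + d₁)))))))) := by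
    linear_combination (((1 + b * d₁) + c * (-(b + d₁))) + a * (-(c * (1 + b * d₁) + (-(b + d₁))))) * e5 - (b * d₅ + 1) * f4
  have gd5 : ((((1 + b * d₁) + c * (-(b + d₁))) + a * (-(c * (1 + b * d₁) + (-(b + d₁))))) + b * (-(a * ((1 + b * d₁) + c * (-(b + d₁))) + (-(c * (1 + b * d₁) + (-(b + d₁))))))) = (1 + b * d₄) * (((1 + b * d₁) + c * (-(b + d₁))) + a * (-(c * (1 + b * d₁) + (-(b + d₁))))) := by
    linear_combination -b * f4
  have g5 : ((((1 + b * d₁) + c * (-(b + d₁))) + a * (-(c * (1 + b * d₁) + (-(b + d₁))))) + b * (-(a * ((1 + b * d₁) + c * (-(b + d₁))) + (-(c * (1 + b * d₁) + (-(b + d₁))))))) ≠ 0 := by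
    rw [gd5]; exact mul_ne_zero h4 g4
  have e6 : d₆ * (1 + c * d₅) = -(c + d₅) := by
    rw [hd6, div_mul_cancel₀ _ h5]
  have f6 : d₆ * (((((1 + b * d₁) + c * (-(b + d₁))) + a * (-(c * (1 + b * d₁) + (-(b + d₁))))) + b * (-(a * ((1 + b * d₁) + c * (-(b + d₁))) + (-(c * (1 + b * d₁) + (-(b + d₁))))))) + c * (-(b * (((1 + b * d₁) + c * (-(b + d₁))) + a * (-(c * (1 + b * d₁) + (-(b + d₁))))) + (-(a * ((1 + b * d₁) + c * (-(b + d₁))) + (-(c * (1 + b * d₁) + (-(b + d₁))))))))) = (-(c * ((((1 + b * d₁) + c * (-(b + d₁))) + a * (-(c * (1 + b * d₁) + (-(b + d₁))))) + b * (-(a * ((1 + b * d₁) + c * (-(b + d₁))) + (-(c * (1 + b * d₁) + (-(b + d₁))))))) + (-(b * (((1 + b * d₁) + c * (-(b + d₁))) + a * (-(c * (1 + b * d₁) + (-(b + d₁))))) + (-(a * ((1 + b * d₁) + c * (-(b + d₁))) + (-(c * (1 + b * d₁) + (-(b + d₁)))))))))) := by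
    linear_combination ((((1 + b * d₁) + c * (-(b + d₁))) + a * (-(c * (1 + b * d₁) + (-(b + d₁))))) + b * (-(a * ((1 + b * d₁) + c * (-(b + d₁))) + (-(c * (1 + b * d₁) + (-(b + d₁))))))) * e6 - (c * d₆ + 1) * f5
  have gd6 : (((((1 + b * d₁) + c * (-(b + d₁))) + a * (-(c * (1 + b * d₁) + (-(b + d₁))))) + b * (-(a * ((1 + b * d₁) + c * (-(b + d₁))) + (-(c * (1 + b * d₁) + (-(b + d₁))))))) + c * (-(b * (((1 + b * d₁) + c * (-(b + d₁))) + a * (-(c * (1 + b * d₁) + (-(b + d₁))))) + (-(a * ((1 + b * d₁) + c * (-(b + d₁))) + (-(c * (1 + b * d₁) + (-(b + d₁))))))))) = (1 + c * d₅) * ((((1 + b * d₁) + c * (-(b + d₁))) + a * (-(c * (1 + b * d₁) + (-(b + d₁))))) + b * (-(a * ((1 + b * d₁) + c * (-(b + d₁))) + (-(c * (1 + b * d₁) + (-(b + d₁))))))) := by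
    linear_combination -c * f5
  have g6 : (((((1 + b * d₁) + c * (-(b + d₁))) + a * (-(c * (1 + b * d₁) + (-(b + d₁))))) + b * (-(a * ((1 + b * d₁) + c * (-(b + d₁))) + (-(c * (1 + b * d₁) + (-(b + d₁))))))) + c * (-(b * (((1 + b * d₁) + c * (-(b + d₁))) + a * (-(c * (1 + b * d₁) + (-(b + d₁))))) + (-(a * ((1 + b * d₁) + c * (-(b + d₁))) + (-(c * (1 + b * d₁) + (-(b + d₁))))))))) ≠ 0 := by
    rw [gd6]; exact mul_ne_zero h5 g5
  rw [div_eq_iff h6]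
  have key : (-(a + d₆)) * (((((1 + b * d₁) + c * (-(b + d₁))) + a * (-(c * (1 + b * d₁) + (-(b + d₁))))) + b * (-(a * ((1 + b * d₁) + c * (-(b + d₁))) + (-(c * (1 + b * d₁) + (-(b + d₁))))))) + c * (-(b * (((1 + b * d₁) + c * (-(b + d₁))) + a * (-(c * (1 + b * d₁) + (-(b + d₁))))) + (-(a * ((1 + b * d₁) + c * (-(b + d₁))) + (-(c * (1 + b * d₁) + (-(b + d₁))))))))) = d₁ * (1 + a * d₆) * (((((1 + b * d₁) + c * (-(b + d₁))) + a * (-(c * (1 + b * d₁) + (-(b + d₁))))) + b * (-(a * ((1 + b * d₁) + c * (-(b + d₁))) + (-(c * (1 + b * d₁) + (-(b + d₁))))))) + c * (-(b * (((1 + b * d₁) + c * (-(b + d₁))) + a * (-(c * (1 + b * d₁) + (-(b + d₁))))) + (-(a * ((1 + b * d₁) + c * (-(b + d₁))) + (-(c * (1 + b * d₁) + (-(b + d₁))))))))) := by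
    linear_combination (-1 - d₁ * a) * f6
  exact mul_right_cancel₀ g6 key
end

section
/- Let α, β, γ ∈ ℝ and set Δ = −(α + β + γ). Define a_n = i·tan(Δn + α), b_n = i·tan(Δn + β), c_n = i·tan(Δn + γ) for n ∈ ℤ. Then for every n ∈ ℤ such that cos(Δn+α), cos(−Δn+β), cos(Δ(n+1)+α), cos(Δ+γ) and cos(γ) are all nonzero, the He–Schramm relations a_n + b_{−n} + c_1 + a_n b_{−n} c_1 = 0 and a_{n+1} + b_{−n} + c_0 + a_{n+1} b_{−n} c_0 = 0 hold. -/
lemma tan_sum_eq_zero (x y z : ℝ) (h : x + y + z = 0)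
    (hx : Real.cos x ≠ 0) (hy : Real.cos y ≠ 0) (hz : Real.cos z ≠ 0) :
    Real.tan x + Real.tan y + Real.tan z = Real.tan x * Real.tan y * Real.tan z := by
  have hs : Real.sin (x + y + z) = 0 := by rw [h]; simp
  rw [Real.sin_add, Real.sin_add, Real.cos_add] at hs
  rw [Real.tan_eq_sin_div_cos, Real.tan_eq_sin_div_cos, Real.tan_eq_sin_div_cos]
  field_simp
  linear_combination hs

lemma key (x y z : ℝ) (h : x + y + z = 0)
    (hx : Real.cos x ≠ 0) (hy : Real.cos y ≠ 0) (hz : Real.cos z ≠ 0) :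
    Complex.I * Real.tan x + Complex.I * Real.tan y + Complex.I * Real.tan z +
      Complex.I * Real.tan x * (Complex.I * Real.tan y) * (Complex.I * Real.tan z) = 0 := by
  have h1 := tan_sum_eq_zero x y z h hx hy hz
  have h2 : (Real.tan x : ℂ) + Real.tan y + Real.tan z
      = (Real.tan x : ℂ) * Real.tan y * Real.tan z := by
    rw [← Complex.ofReal_mul, ← Complex.ofReal_mul, ← Complex.ofReal_add,
      ← Complex.ofReal_add, h1]
  linear_combination Complex.I * h2 +
    (Real.tan x : ℂ) * Real.tan y * Real.tan z * Complex.I * Complex.I_sq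

/-- The explicit formulas `a_n = i tan(Δn+α)`, `b_n = i tan(Δn+β)`,
`c_n = i tan(Δn+γ)` with `Δ = -(α+β+γ)` satisfy the He–Schramm relations of the
conformally symmetric hexagonal labeling, wherever the tangents are defined. -/
theorem explicit_solution_heSchramm (α β γ Δ : ℝ) (hΔ : Δ = -(α + β + γ))
    (a b c : ℤ → ℂ)
    (ha : ∀ n : ℤ, a n = Complex.I * Real.tan (Δ * n + α))
    (hb : ∀ n : ℤ, b n = Complex.I * Real.tan (Δ * n + β))
    (hc : ∀ n : ℤ, c n = Complex.I * Real.tan (Δ * n + γ)) :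
    ∀ n : ℤ, Real.cos (Δ * n + α) ≠ 0 → Real.cos (-(Δ * n) + β) ≠ 0 →
      Real.cos (Δ * (n + 1) + α) ≠ 0 → Real.cos (Δ + γ) ≠ 0 →
      Real.cos γ ≠ 0 →
      a n + b (-n) + c 1 + a n * b (-n) * c 1 = 0 ∧
      a (n + 1) + b (-n) + c 0 + a (n + 1) * b (-n) * c 0 = 0 := by
  intro n h1 h2 h3 h4 h5
  rw [ha, ha, hb, hc, hc]
  have e1 : (Δ : ℝ) * ((-n : ℤ) : ℝ) + β = -(Δ * n) + β := by push_cast; ring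
  have e2 : (Δ : ℝ) * ((1 : ℤ) : ℝ) + γ = Δ + γ := by push_cast; ring
  have e3 : (Δ : ℝ) * (((n + 1) : ℤ) : ℝ) + α = Δ * (n + 1) + α := by push_cast; ring
  have e4 : (Δ : ℝ) * ((0 : ℤ) : ℝ) + γ = γ := by push_cast; ring
  rw [e1, e2, e3, e4]
  constructor
  · exact key _ _ _ (by push_cast; linarith) h1 h2 h4
  · exact key _ _ _ (by push_cast; linarith) h3 h2 h5
end

section
/- For x ∈ ℂ define T_x(d) = −(x+d)/(1+xd). Let φ, χ, α ∈ ℝ and define a sequence (x_n), n ∈ ℤ, by x_0 = i·tan(α) and x_{n+1} = T_{i·tan(χ)}(T_{i·tan(φ)}(x_n)), assuming that for all n the quantities cos(α + n(φ−χ)), cos(φ), cos(χ) and the relevant denominators are nonzero. Then x_n = i·tan(α + n(φ − χ)) for all n ∈ ℤ. -/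
/-!
In the tangent parametrization `d = i tan θ` the step map `T` is the tangent addition formula:
`T_{i tan u}(i tan v) = i tan (-(u + v))`, so two steps move `θ` by `φ - χ`, which gives the
forward induction. Since each `T_t` is an involution wherever `1 - t² ≠ 0`, which holds for
`t = i tan φ`, the recursion can be run backwards as well, giving the claim for negative `n`.
-/

open Complex

section Field

variable {K : Type*} [Field K]

/-- The paper's `T_t(d)`: the solution `d'` of `t + d + d' + t d d' = 0`. -/
def heSchrammMap (t d : K) : K := -(t + d) / (1 + t * d)

theorem one_add_mul_heSchrammMap {t d : K} (h : 1 + t * d ≠ 0) :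
    1 + t * heSchrammMap t d = (1 - t ^ 2) / (1 + t * d) := by
  unfold heSchrammMap
  field_simp
  ring

theorem heSchrammMap_heSchrammMap {t d : K} (h : 1 + t * d ≠ 0) (ht : 1 - t ^ 2 ≠ 0) :
    heSchrammMap t (heSchrammMap t d) = d := by
  rw [heSchrammMap, one_add_mul_heSchrammMap h, heSchrammMap]
  field_simp
  ring

end Field

theorem one_sub_sq_I_mul_ofReal_ne_zero (a : ℝ) : 1 - (I * a) ^ 2 ≠ 0 := by
  have h : 1 - (I * a) ^ 2 = ((1 + a ^ 2 : ℝ) : ℂ) := by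
    push_cast
    ring_nf
    rw [I_sq]
    ring
  rw [h]
  exact_mod_cast (by positivity : (1 : ℝ) + a ^ 2 ≠ 0)

section Tangent

variable {u v : ℝ}

theorem one_add_I_tan_mul_I_tan (hu : Real.cos u ≠ 0) (hv : Real.cos v ≠ 0) :
    1 + I * Real.tan u * (I * Real.tan v) =
      (Real.cos (u + v) : ℂ) / (Real.cos u * Real.cos v) := by
  have hu' : Complex.cos u ≠ 0 := by exact_mod_cast hu
  have hv' : Complex.cos v ≠ 0 := by exact_mod_cast hv
  rw [Real.tan_eq_sin_div_cos, Real.tan_eq_sin_div_cos, Real.cos_add]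
  push_cast
  field_simp
  ring_nf
  rw [I_sq]
  ring

/-- When `cos (u + v) = 0`, both sides are `0` by the junk values of `/` and `Real.tan`. -/
theorem heSchrammMap_I_tan (hu : Real.cos u ≠ 0) (hv : Real.cos v ≠ 0) :
    heSchrammMap (I * Real.tan u) (I * Real.tan v) = I * Real.tan (-(u + v)) := by
  have hu' : Complex.cos u ≠ 0 := by exact_mod_cast hu
  have hv' : Complex.cos v ≠ 0 := by exact_mod_cast hv
  rw [heSchrammMap, one_add_I_tan_mul_I_tan hu hv, Real.tan_neg, Real.tan_eq_sin_div_cos (u + v),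
    Real.sin_add, Real.tan_eq_sin_div_cos, Real.tan_eq_sin_div_cos]
  push_cast
  by_cases huv : Complex.cos (u + v) = 0
  · simp [huv]
  · field_simp

theorem heSchrammMap_heSchrammMap_I_tan {θ φ χ : ℝ} (hθ : Real.cos θ ≠ 0)
    (hφ : Real.cos φ ≠ 0) (hχ : Real.cos χ ≠ 0) (hd : 1 + I * Real.tan φ * (I * Real.tan θ) ≠ 0) :
    heSchrammMap (I * Real.tan χ) (heSchrammMap (I * Real.tan φ) (I * Real.tan θ)) =
      I * Real.tan (θ + φ - χ) := by
  have hφθ : Real.cos (φ + θ) ≠ 0 := by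
    intro h
    apply hd
    rw [one_add_I_tan_mul_I_tan hφ hθ, h]
    simp
  rw [heSchrammMap_I_tan hφ hθ, heSchrammMap_I_tan hχ (by rwa [Real.cos_neg])]
  congr 3
  ring

end Tangent

open Complex in
/-- Propagation along a lattice direction: the sequence defined by
`x₀ = i tan α` and `x_{n+1} = T_{i tan χ}(T_{i tan φ}(x_n))`, with
`T_x(d) = -(x+d)/(1+xd)`, is the arithmetic progression in the tangent
parametrization: `x_n = i tan(α + n(φ - χ))`. -/
theorem tangent_progression (φ χ α : ℝ)
    (hφ : Real.cos φ ≠ 0) (hχ : Real.cos χ ≠ 0)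
    (hcos : ∀ n : ℤ, Real.cos (α + n * (φ - χ)) ≠ 0)
    (x : ℤ → ℂ)
    (hx0 : x 0 = I * Real.tan α)
    (hden1 : ∀ n : ℤ, 1 + (I * Real.tan φ) * x n ≠ 0)
    (hden2 : ∀ n : ℤ,
      1 + (I * Real.tan χ) *
        (-((I * Real.tan φ) + x n) / (1 + (I * Real.tan φ) * x n)) ≠ 0)
    (hrec : ∀ n : ℤ, x (n + 1) =
      -((I * Real.tan χ) +
          (-((I * Real.tan φ) + x n) / (1 + (I * Real.tan φ) * x n))) /
        (1 + (I * Real.tan χ) *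
          (-((I * Real.tan φ) + x n) / (1 + (I * Real.tan φ) * x n)))) :
    ∀ n : ℤ, x n = I * Real.tan (α + n * (φ - χ)) := by
  set tφ : ℂ := I * Real.tan φ
  set tχ : ℂ := I * Real.tan χ
  have hstep (n : ℤ) : x (n + 1) = heSchrammMap tχ (heSchrammMap tφ (x n)) := hrec n
  have hden (n : ℤ) : 1 + tχ * heSchrammMap tφ (x n) ≠ 0 := hden2 n
  have hθ_succ (n : ℤ) : α + ↑(n + 1) * (φ - χ) = α + n * (φ - χ) + φ - χ := by push_cast; ring
  have forward (n : ℤ) (hn : x n = I * Real.tan (α + n * (φ - χ))) :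
      x (n + 1) = I * Real.tan (α + ↑(n + 1) * (φ - χ)) := by
    have hd := hden1 n
    rw [hn] at hd
    rw [hstep n, hn, hθ_succ]
    exact heSchrammMap_heSchrammMap_I_tan (hcos n) hφ hχ hd
  have backward (n : ℤ) (hn : x (n + 1) = I * Real.tan (α + ↑(n + 1) * (φ - χ))) :
      x n = I * Real.tan (α + n * (φ - χ)) := by
    have hx : x n = heSchrammMap tφ (heSchrammMap tχ (x (n + 1))) := by
      rw [hstep n, heSchrammMap_heSchrammMap (hden n) (one_sub_sq_I_mul_ofReal_ne_zero _),
        heSchrammMap_heSchrammMap (hden1 n) (one_sub_sq_I_mul_ofReal_ne_zero _)]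
    have hd : 1 + tχ * x (n + 1) ≠ 0 := by
      rw [hstep n, one_add_mul_heSchrammMap (hden n)]
      exact div_ne_zero (one_sub_sq_I_mul_ofReal_ne_zero _) (hden n)
    rw [hn] at hd
    rw [hx, hn, heSchrammMap_heSchrammMap_I_tan (hcos (n + 1)) hχ hφ hd, hθ_succ]
    congr 3
    ring
  intro n
  induction n using Int.inductionOn' (b := 0) with
  | zero => simpa using hx0
  | succ k _ ih => exact forward k ih
  | pred k _ ih => exact backward (k - 1) (by rwa [sub_add_cancel])
end

section
/- Let Δ, α ∈ ℝ and suppose that for every n ∈ ℤ one has cos(Δn + α) ≠ 0 and tan(Δn + α) > 0. Then Δ is an integer multiple of π; in particular tan(Δn + α) = tan(α) for all n ∈ ℤ. -/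
open Real

/-- If `cos x ≠ 0` and `tan x > 0`, then the fractional part of `x/π` lies in `(0, 1/2)`. -/
lemma fract_mem_of_tan_pos {x : ℝ} (hc : Real.cos x ≠ 0) (ht : 0 < Real.tan x) :
    0 < Int.fract (x / π) ∧ Int.fract (x / π) < 1 / 2 := by
  have hπ : (0:ℝ) < π := Real.pi_pos
  set t := Int.fract (x / π) with htdef
  have h0 : 0 ≤ t := Int.fract_nonneg _
  have h1 : t < 1 := Int.fract_lt_one _
  have hx : x = π * t + ⌊x / π⌋ * π := by
    have : (⌊x / π⌋ : ℝ) + t = x / π := by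
      rw [htdef]; rw [Int.fract]; ring
    field_simp at this
    nlinarith [this]
  have htan : Real.tan x = Real.tan (π * t) := by
    rw [hx, Real.tan_add_int_mul_pi]
  -- exclude t = 0
  have ht0 : t ≠ 0 := by
    intro h0'
    rw [htan, h0', mul_zero, Real.tan_zero] at ht
    exact lt_irrefl 0 ht
  -- exclude t = 1/2
  have ht12 : t ≠ 1 / 2 := by
    intro h12
    apply hc
    rw [Real.cos_eq_zero_iff]
    exact ⟨⌊x / π⌋, by push_cast; linear_combination hx + π * h12⟩
  -- exclude t > 1/2
  have htlt : t < 1 / 2 := by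
    by_contra hle
    push_neg at hle
    have hlt : 1 / 2 < t := lt_of_le_of_ne hle (Ne.symm ht12)
    have : Real.tan (π * t) < 0 := by
      rw [← Real.tan_sub_pi]
      apply Real.tan_neg_of_neg_of_pi_div_two_lt <;> nlinarith
    rw [htan] at ht; linarith
  exact ⟨lt_of_le_of_ne h0 (Ne.symm ht0), htlt⟩

/-- Entireness forces constancy: if `tan(Δn + α)` is defined and positive for all
integers `n`, then `Δ` is an integer multiple of `π`; in particular all the values
`tan(Δn + α)` coincide with `tan α`. -/
theorem entire_implies_constant (Δ α : ℝ)
    (h : ∀ n : ℤ, Real.cos (Δ * n + α) ≠ 0 ∧ 0 < Real.tan (Δ * n + α)) :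
    (∃ m : ℤ, Δ = m * Real.pi) ∧
      ∀ n : ℤ, Real.tan (Δ * n + α) = Real.tan α := by
  have hπ : (0:ℝ) < π := Real.pi_pos
  set t : ℤ → ℝ := fun n => Int.fract ((Δ * n + α) / π) with htdef
  have hmem : ∀ n : ℤ, 0 < t n ∧ t n < 1 / 2 := fun n =>
    fract_mem_of_tan_pos (h n).1 (h n).2
  set d : ℝ := Int.fract (Δ / π) with hddef
  have hd0 : 0 ≤ d := Int.fract_nonneg _
  have hd1 : d < 1 := Int.fract_lt_one _
  -- recurrence: t (n+1) = fract (t n + d)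
  have hrec : ∀ n : ℤ, t (n + 1) = Int.fract (t n + d) := by
    intro n
    have hne : π ≠ 0 := hπ.ne'
    have e : (Δ * ((n:ℝ) + 1) + α) / π
        = (t n + d) + ((⌊(Δ * n + α) / π⌋ + ⌊Δ / π⌋ : ℤ) : ℝ) := by
      simp only [htdef, hddef, ← Int.self_sub_floor]
      push_cast
      field_simp
      ring
    have e2 : t (n + 1) = Int.fract ((Δ * ((n:ℝ) + 1) + α) / π) := by
      show Int.fract ((Δ * ((n + 1 : ℤ) : ℝ) + α) / π) = _
      norm_num
    rw [e2, e, Int.fract_add_intCast]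
  -- main claim: d = 0
  have hd : d = 0 := by
    by_contra hdne
    have hdpos : 0 < d := lt_of_le_of_ne hd0 (Ne.symm hdne)
    rcases le_or_gt d (1/2) with hcase | hcase
    · -- t increments by d each step
      have hstep : ∀ n : ℤ, t (n + 1) = t n + d := by
        intro n
        rw [hrec n, Int.fract_eq_self.2 ⟨by linarith [(hmem n).1], by linarith [(hmem n).2]⟩]
      have hlin : ∀ k : ℕ, t k = t 0 + k * d := by
        intro k
        induction k with
        | zero => simp
        | succ m ih =>
          have := hstep m
          push_cast
          push_cast at this ih
          rw [this, ih]; ring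
      obtain ⟨k, hk⟩ := exists_nat_gt ((1/2 : ℝ) / d)
      have h1 : t k < 1 / 2 := (hmem k).2
      rw [hlin k] at h1
      have h2 : (1/2 : ℝ) < k * d := by
        rw [div_lt_iff₀ hdpos] at hk; linarith
      linarith [(hmem 0).1]
    · -- t decrements by 1 - d each step
      have hstep : ∀ n : ℤ, t (n + 1) = t n + d - 1 := by
        intro n
        have h1 : t n + d - 1 < 1 := by linarith [(hmem n).2]
        have h2 : 0 ≤ t n + d - 1 := by
          by_contra hneg
          push_neg at hneg
          have : Int.fract (t n + d) = t n + d :=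
            Int.fract_eq_self.2 ⟨by linarith [(hmem n).1], by linarith⟩
          have := hrec n
          rw [‹Int.fract (t n + d) = t n + d›] at this
          linarith [(hmem (n+1)).2, (hmem n).1]
        have : Int.fract (t n + d) = t n + d - 1 := by
          have : t n + d - 1 = t n + d + (-1 : ℤ) := by push_cast; ring
          rw [← Int.fract_eq_self.2 ⟨h2, h1⟩, this, Int.fract_add_intCast]
        rw [hrec n, this]
      have hlin : ∀ k : ℕ, t k = t 0 + k * (d - 1) := by
        intro k
        induction k with
        | zero => simp
        | succ m ih =>
          have := hstep m
          push_cast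
          push_cast at this ih
          rw [this, ih]; ring
      obtain ⟨k, hk⟩ := exists_nat_gt ((t 0) / (1 - d))
      have h1 : 0 < t k := (hmem k).1
      rw [hlin k] at h1
      have h2 : t 0 < k * (1 - d) := by
        rw [div_lt_iff₀ (by linarith : (0:ℝ) < 1 - d)] at hk; linarith
      nlinarith
  -- so Δ is an integer multiple of π
  have hΔ : Δ = ⌊Δ / π⌋ * π := by
    have : Int.fract (Δ / π) = 0 := hd
    rw [Int.fract] at this
    have h' : Δ / π = (⌊Δ / π⌋ : ℝ) := by linarith
    field_simp at h'
    linarith [h']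
  refine ⟨⟨⌊Δ / π⌋, hΔ⟩, fun n => ?_⟩
  rw [hΔ]
  have : (⌊Δ / π⌋ : ℝ) * π * n + α = α + (⌊Δ / π⌋ * n : ℤ) * π := by push_cast; ring
  rw [this, Real.tan_add_int_mul_pi]
end

section
/- Let θ_1 < θ_2 < θ_3 < θ_1 + π be real numbers, and define six points on the unit circle by z_k = e^{iθ_k} for k = 1,2,3 and z_{k+3} = −z_k (indices mod 6). For each k (mod 6), assume the line through z_{k−1} and z_{k+1} and the line through z_k and z_{k+2} are not parallel, and let w_k be their intersection point. Then for each k there is a circle C_k passing through the three points w_{k−1}, z_k, w_k, such that: (1) C_k is tangent to the unit circle at z_k (the two circles meet at z_k with a common tangent line, C_k lying inside the closed unit disc); and (2) for each k, the circles C_k and C_{k+1} are externally tangent at the point w_k. In particular the six circles C_1, …, C_6 form a flower around the unit circle which is invariant under the point reflection z ↦ −z. -/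
/-!
Put `c_k = (1 - r_k) z_k`, so that the circle of radius `r_k` about `c_k` is internally tangent
to the unit circle at `z_k`. Everything else follows once consecutive centers satisfy
`c_k - c_{k+1} = (r_k + r_{k+1}) z_{k-1}`: then `|c_k - c_{k+1}| = r_k + r_{k+1}`, and since
`z_{k+2} = -z_{k-1}` the point
`(1 - r_k) z_k + r_k z_{k+2} = (1 - r_{k+1}) z_{k+1} + r_{k+1} z_{k-1}`
lies on both circles and on both lines, so it is `w_k`.
If `α_k` is half the arc from `z_k` to `z_{k+1}`, any three consecutive half-arcs add up to
`π / 2` (the six arcs are symmetric and fill the circle), and `r_k = tan α_{k-1} tan α_k`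
solves the relation.
-/

open Complex
open scoped Real

lemma eq_of_mem_lines_of_not_parallel {K V : Type*} [Field K] [AddCommGroup V] [Module K V]
    {a b d₁ d₂ x y : V} (hnp : ¬ ∃ t : K, d₂ = t • d₁)
    (hx₁ : ∃ t : K, x = a + t • d₁) (hx₂ : ∃ t : K, x = b + t • d₂)
    (hy₁ : ∃ t : K, y = a + t • d₁) (hy₂ : ∃ t : K, y = b + t • d₂) : x = y := by
  obtain ⟨t₁, rfl⟩ := hx₁
  obtain ⟨s₁, hs₁⟩ := hx₂
  obtain ⟨t₂, rfl⟩ := hy₁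
  obtain ⟨s₂, hs₂⟩ := hy₂
  have hd : (s₁ - s₂) • d₂ = (t₁ - t₂) • d₁ := by
    linear_combination (norm := module) hs₂ - hs₁
  by_cases hs : s₁ = s₂
  · rw [hs₁, hs₂, hs]
  · refine absurd ⟨(s₁ - s₂)⁻¹ * (t₁ - t₂), ?_⟩ hnp
    rw [mul_smul, ← hd, inv_smul_smul₀ (sub_ne_zero.mpr hs)]

lemma dist_eq_of_sub_eq_smul {E : Type*} [NormedAddCommGroup E] [NormedSpace ℝ E]
    {x y u : E} {ρ : ℝ} (hu : ‖u‖ = 1) (hρ : 0 ≤ ρ) (h : x - y = ρ • u) : dist x y = ρ := by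
  rw [dist_eq_norm, h, norm_smul, hu, mul_one, Real.norm_of_nonneg hρ]

lemma ZMod.six_forall_of_add_three {P : ZMod 6 → Prop} (h1 : P 1) (h2 : P 2) (h3 : P 3)
    (h : ∀ k, P k → P (k + 3)) : ∀ k, P k := by
  intro k
  fin_cases k
  exacts [h 3 h3, h1, h2, h3, h 1 h1, h 2 h2]

section Flower

variable {E : Type*} [NormedAddCommGroup E] [NormedSpace ℝ E]
  {z w : ZMod 6 → E} {r : ZMod 6 → ℝ}

lemma flower_intersection_eq (hzsym : ∀ k, z (k + 3) = -z k)
    (hnp : ∀ k, ¬ ∃ t : ℝ, z (k + 2) - z k = t • (z (k + 1) - z (k - 1)))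
    (hw : ∀ k, (∃ t : ℝ, w k = z (k - 1) + t • (z (k + 1) - z (k - 1))) ∧
      (∃ t : ℝ, w k = z k + t • (z (k + 2) - z k)))
    (hchain : ∀ k, (1 - r k) • z k - (1 - r (k + 1)) • z (k + 1) = (r k + r (k + 1)) • z (k - 1))
    (k : ZMod 6) : w k = (1 - r k) • z k - r k • z (k - 1) := by
  have hz : z (k + 2) = -z (k - 1) := by rw [← hzsym]; ring_nf
  refine eq_of_mem_lines_of_not_parallel (hnp k) (hw k).1 (hw k).2 ⟨1 - r (k + 1), ?_⟩ ⟨r k, ?_⟩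
  · linear_combination (norm := module) hchain k
  · rw [hz]; module

theorem exists_flower_of_chain (hz : ∀ k, ‖z k‖ = 1) (hzsym : ∀ k, z (k + 3) = -z k)
    (hnp : ∀ k, ¬ ∃ t : ℝ, z (k + 2) - z k = t • (z (k + 1) - z (k - 1)))
    (hw : ∀ k, (∃ t : ℝ, w k = z (k - 1) + t • (z (k + 1) - z (k - 1))) ∧
      (∃ t : ℝ, w k = z k + t • (z (k + 2) - z k)))
    (hr_pos : ∀ k, 0 < r k) (hr_lt : ∀ k, r k < 1) (hr_three : ∀ k, r (k + 3) = r k)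
    (hchain : ∀ k, (1 - r k) • z k - (1 - r (k + 1)) • z (k + 1) = (r k + r (k + 1)) • z (k - 1))
    (k : ZMod 6) :
    0 < r k ∧
      dist (w (k - 1)) ((1 - r k) • z k) = r k ∧
      dist (z k) ((1 - r k) • z k) = r k ∧
      dist (w k) ((1 - r k) • z k) = r k ∧
      dist ((1 - r k) • z k) 0 = 1 - r k ∧
      dist ((1 - r k) • z k) ((1 - r (k + 1)) • z (k + 1)) = r k + r (k + 1) ∧
      (1 - r (k + 3)) • z (k + 3) = -((1 - r k) • z k) ∧ r (k + 3) = r k := by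
  have hw_eq := flower_intersection_eq hzsym hnp hw hchain
  have hprev := hchain (k - 1)
  rw [sub_add_cancel] at hprev
  refine ⟨hr_pos k, ?_, ?_, ?_, ?_, ?_, ?_, hr_three k⟩
  · refine dist_eq_of_sub_eq_smul (hz (k - 1 - 1)) (hr_pos k).le ?_
    rw [hw_eq]
    linear_combination (norm := module) hprev
  · exact dist_eq_of_sub_eq_smul (hz k) (hr_pos k).le (by module)
  · refine dist_eq_of_sub_eq_smul (norm_neg (z (k - 1)) ▸ hz (k - 1)) (hr_pos k).le ?_
    rw [hw_eq]
    module
  · exact dist_eq_of_sub_eq_smul (hz k) (sub_nonneg.mpr (hr_lt k).le) (by module)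
  · exact dist_eq_of_sub_eq_smul (hz (k - 1)) (add_pos (hr_pos k) (hr_pos (k + 1))).le (hchain k)
  · rw [hr_three, hzsym, smul_neg]

end Flower

lemma Complex.tan_mul_tan_relation {a b c : ℂ} (habc : a + b + c = π / 2) (ha : cos a ≠ 0)
    (hb : cos b ≠ 0) (hc : cos c ≠ 0) (hc' : sin c ≠ 0) :
    (1 - tan a * tan b) * exp (2 * a * I)
        - (1 - tan b * tan c) * (exp (2 * a * I) * exp (2 * b * I))
      = tan a * tan b + tan b * tan c := by
  obtain rfl : c = π / 2 - (a + b) := by linear_combination habc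
  rw [tan_pi_div_two_sub]
  rw [cos_pi_div_two_sub] at hc
  rw [sin_pi_div_two_sub] at hc'
  have hexp (x : ℂ) : exp (2 * x * I) = exp (x * I) ^ 2 := by rw [← exp_nat_mul]; ring_nf
  have hX := exp_ne_zero (a * I)
  have hY := exp_ne_zero (b * I)
  simp only [tan_eq_sin_div_cos, hexp]
  simp only [Complex.sin, Complex.cos, neg_mul, add_mul, exp_add, exp_neg] at ha hb hc hc' ⊢
  generalize exp (a * I) = X at hX ha hb hc hc' ⊢
  generalize exp (b * I) = Y at hY ha hb hc hc' ⊢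
  field_simp at ha hb hc hc'
  have hX' : X ^ 2 + 1 ≠ 0 := (div_ne_zero_iff.mp ha).1
  have hY' : Y ^ 2 + 1 ≠ 0 := (div_ne_zero_iff.mp hb).1
  have hXY : 1 - X ^ 2 * Y ^ 2 ≠ 0 := left_ne_zero_of_mul (div_ne_zero_iff.mp hc).1
  have hXY' : X ^ 2 * Y ^ 2 + 1 ≠ 0 := (div_ne_zero_iff.mp hc').1
  field_simp
  ring_nf
  rw [I_sq]
  ring

noncomputable def petalRadius (a b : ℝ) : ℝ := Real.tan a * Real.tan b

section PetalRadius

variable {a b c : ℝ}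

lemma petalRadius_pos (ha : 0 < a) (hb : 0 < b) (hab : a + b < π / 2) : 0 < petalRadius a b :=
  mul_pos (Real.tan_pos_of_pos_of_lt_pi_div_two ha (by linarith))
    (Real.tan_pos_of_pos_of_lt_pi_div_two hb (by linarith))

lemma petalRadius_lt_one (ha : 0 < a) (hb : 0 < b) (hab : a + b < π / 2) :
    petalRadius a b < 1 := by
  have hca : 0 < Real.cos a := Real.cos_pos_of_mem_Ioo ⟨by linarith, by linarith⟩
  have hcb : 0 < Real.cos b := Real.cos_pos_of_mem_Ioo ⟨by linarith, by linarith⟩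
  have hcab : 0 < Real.cos (a + b) := Real.cos_pos_of_mem_Ioo ⟨by linarith, by linarith⟩
  have h : 1 - petalRadius a b = Real.cos (a + b) / (Real.cos a * Real.cos b) := by
    rw [petalRadius, Real.tan_eq_sin_div_cos, Real.tan_eq_sin_div_cos, Real.cos_add]
    field_simp
  linarith [div_pos hcab (mul_pos hca hcb)]

lemma petalRadius_chain (habc : a + b + c = π / 2) (ha : 0 < a) (hb : 0 < b) (hc : 0 < c)
    {z₀ z₁ z₂ : ℂ} (h₁ : z₁ = z₀ * exp (2 * a * I)) (h₂ : z₂ = z₁ * exp (2 * b * I)) :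
    (1 - petalRadius a b) • z₁ - (1 - petalRadius b c) • z₂
      = (petalRadius a b + petalRadius b c) • z₀ := by
  have hcos : ∀ x : ℝ, 0 < x → x < π / 2 → cos x ≠ 0 := fun x h0 h1 ↦
    ofReal_cos x ▸ ofReal_ne_zero.mpr (Real.cos_pos_of_mem_Ioo ⟨by linarith, h1⟩).ne'
  have hsin : sin c ≠ 0 :=
    ofReal_sin c ▸ ofReal_ne_zero.mpr (Real.sin_pos_of_pos_of_lt_pi hc (by linarith)).ne'
  have key := tan_mul_tan_relation (by exact_mod_cast habc) (hcos a ha (by linarith))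
    (hcos b hb (by linarith)) (hcos c hc (by linarith)) hsin
  subst h₁ h₂
  simp only [petalRadius, real_smul]
  push_cast
  linear_combination z₀ * key

end PetalRadius

lemma add_three_eq_of_consecutive_sum {α : ZMod 6 → ℝ}
    (hα_sum : ∀ k, α (k - 1) + α k + α (k + 1) = π / 2) (k : ZMod 6) : α (k + 3) = α k := by
  have h₁ := hα_sum (k + 1)
  have h₂ := hα_sum (k + 2)
  ring_nf at h₁ h₂ ⊢
  linarith

lemma exists_petal_radii {α : ZMod 6 → ℝ} (hα_pos : ∀ k, 0 < α k)
    (hα_sum : ∀ k, α (k - 1) + α k + α (k + 1) = π / 2) {z : ZMod 6 → ℂ}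
    (hz_rot : ∀ k, z (k + 1) = z k * exp (2 * α k * I)) :
    ∃ r : ZMod 6 → ℝ, (∀ k, 0 < r k) ∧ (∀ k, r k < 1) ∧ (∀ k, r (k + 3) = r k) ∧
      ∀ k, (1 - r k) • z k - (1 - r (k + 1)) • z (k + 1) = (r k + r (k + 1)) • z (k - 1) := by
  have hlt (k : ZMod 6) : α (k - 1) + α k < π / 2 := by linarith [hα_sum k, hα_pos (k + 1)]
  refine ⟨fun k ↦ petalRadius (α (k - 1)) (α k),
    fun k ↦ petalRadius_pos (hα_pos _) (hα_pos k) (hlt k),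
    fun k ↦ petalRadius_lt_one (hα_pos _) (hα_pos k) (hlt k), fun k ↦ ?_, fun k ↦ ?_⟩
  · simp only [add_sub_right_comm, add_three_eq_of_consecutive_sum hα_sum]
  · simp only [add_sub_cancel_right]
    exact petalRadius_chain (hα_sum k) (hα_pos _) (hα_pos k) (hα_pos _)
      (by rw [← hz_rot, sub_add_cancel]) (hz_rot k)

lemma exists_halfArcs {θ₁ θ₂ θ₃ : ℝ} (h12 : θ₁ < θ₂) (h23 : θ₂ < θ₃) (h31 : θ₃ < θ₁ + π)
    {z : ZMod 6 → ℂ} (hz1 : z 1 = exp (θ₁ * I)) (hz2 : z 2 = exp (θ₂ * I))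
    (hz3 : z 3 = exp (θ₃ * I)) (hzsym : ∀ k, z (k + 3) = -z k) :
    ∃ α : ZMod 6 → ℝ, (∀ k, 0 < α k) ∧ (∀ k, α (k - 1) + α k + α (k + 1) = π / 2) ∧
      ∀ k, z (k + 1) = z k * exp (2 * α k * I) := by
  set α : ZMod 6 → ℝ := ![(θ₁ + π - θ₃) / 2, (θ₂ - θ₁) / 2, (θ₃ - θ₂) / 2,
    (θ₁ + π - θ₃) / 2, (θ₂ - θ₁) / 2, (θ₃ - θ₂) / 2]
  have hα_three : ∀ k, α (k + 3) = α k := by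
    intro k; fin_cases k <;> rfl
  refine ⟨α, fun k ↦ ?_, ZMod.six_forall_of_add_three ?_ ?_ ?_ fun k hk ↦ ?_,
    ZMod.six_forall_of_add_three ?_ ?_ ?_ fun k hk ↦ ?_⟩
  · fin_cases k <;> simp only [α, Fin.reduceFinMk, Matrix.cons_val] <;> linarith
  · show α 0 + α 1 + α 2 = π / 2
    simp only [α, Matrix.cons_val]; ring
  · show α 1 + α 2 + α 3 = π / 2
    simp only [α, Matrix.cons_val]; ring
  · show α 2 + α 3 + α 4 = π / 2
    simp only [α, Matrix.cons_val]; ring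
  · rwa [add_sub_right_comm, add_right_comm k 3 1, hα_three, hα_three, hα_three]
  · show z 2 = z 1 * exp (2 * α 1 * I)
    rw [hz1, hz2, ← exp_add]
    simp only [α, Matrix.cons_val]; push_cast; ring_nf
  · show z 3 = z 2 * exp (2 * α 2 * I)
    rw [hz2, hz3, ← exp_add]
    simp only [α, Matrix.cons_val]; push_cast; ring_nf
  · show z (1 + 3) = z 3 * exp (2 * α 3 * I)
    rw [hzsym, hz1, hz3, ← exp_add, ← neg_one_mul, ← exp_pi_mul_I, ← exp_add]
    simp only [α, Matrix.cons_val]; push_cast; ring_nf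
  · rw [add_right_comm, hzsym, hzsym, hα_three, hk, neg_mul]

open Complex in
/-- The normalized conformally symmetric flower: for antipodally symmetric points
`z_k` on the unit circle (`z_k = e^{iθ_k}`, `z_{k+3} = -z_k`), with `w_k` the
intersection of the (non-parallel) lines `(z_{k-1}, z_{k+1})` and `(z_k, z_{k+2})`,
there exist circles `C_k` (centers `c_k`, radii `r_k > 0`) through `w_{k-1}, z_k, w_k`
that are internally tangent to the unit circle at `z_k` (so `C_k` lies in the closed
unit disc), with `C_k` and `C_{k+1}` externally tangent at `w_k`, and the whole
flower invariant under the point reflection `z ↦ -z`. -/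
theorem conformally_symmetric_flower
    (θ₁ θ₂ θ₃ : ℝ) (h12 : θ₁ < θ₂) (h23 : θ₂ < θ₃) (h31 : θ₃ < θ₁ + Real.pi)
    (z : ZMod 6 → ℂ)
    (hz1 : z 1 = Complex.exp (θ₁ * I))
    (hz2 : z 2 = Complex.exp (θ₂ * I))
    (hz3 : z 3 = Complex.exp (θ₃ * I))
    (hzsym : ∀ k : ZMod 6, z (k + 3) = -z k)
    (hnp : ∀ k : ZMod 6, ¬ ∃ t : ℝ, z (k + 2) - z k = t • (z (k + 1) - z (k - 1)))
    (w : ZMod 6 → ℂ)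
    (hw : ∀ k : ZMod 6,
      (∃ t : ℝ, w k = z (k - 1) + t • (z (k + 1) - z (k - 1))) ∧
      (∃ t : ℝ, w k = z k + t • (z (k + 2) - z k))) :
    ∃ (c : ZMod 6 → ℂ) (r : ZMod 6 → ℝ),
      ∀ k : ZMod 6,
        0 < r k ∧
        dist (w (k - 1)) (c k) = r k ∧
        dist (z k) (c k) = r k ∧
        dist (w k) (c k) = r k ∧
        dist (c k) 0 = 1 - r k ∧
        dist (c k) (c (k + 1)) = r k + r (k + 1) ∧
        c (k + 3) = -c k ∧ r (k + 3) = r k := by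
  obtain ⟨α, hα_pos, hα_sum, hz_rot⟩ := exists_halfArcs h12 h23 h31 hz1 hz2 hz3 hzsym
  have hz_norm : ∀ k, ‖z k‖ = 1 :=
    ZMod.six_forall_of_add_three (by rw [hz1]; exact norm_exp_ofReal_mul_I θ₁)
      (by rw [hz2]; exact norm_exp_ofReal_mul_I θ₂) (by rw [hz3]; exact norm_exp_ofReal_mul_I θ₃)
      fun k hk ↦ by rw [hzsym, norm_neg, hk]
  obtain ⟨r, hr_pos, hr_lt, hr_three, hchain⟩ := exists_petal_radii hα_pos hα_sum hz_rot
  exact ⟨_, r, exists_flower_of_chain hz_norm hzsym hnp hw hr_pos hr_lt hr_three hchain⟩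
end
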